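/- Let S = {0,1,...,M} with M ≥ 2 and let f, g : S → ℝ satisfy f(x) - f(a) = g(a)·f(x-a) for all a ≤ x in S, with f(0) = 0 and f(1) = 1. Set c = g(1). Then f(y) = 1 + c + c² + ... + c^{y-1} for all y in S with y ≥ 1; in particular if c = 1 then f(y) = y, and if c ≠ 1 then f(y) = (c^y - 1)/(c - 1). -/
import Mathlib


theorem stmt_7 (M : ℕ) (hM : 2 ≤ M) (f g : ℕ → ℝ)
    (heq : ∀ a x, a ≤ x → x ≤ M → f x - f a = g a * f (x - a))
    (hf0 : f 0 = 0) (hf1 : f 1 = 1) :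
    ∀ y, 1 ≤ y → y ≤ M →
      f y = ∑ i ∈ Finset.range y, (g 1) ^ i ∧
      (g 1 = 1 → f y = y) ∧
      (g 1 ≠ 1 → f y = ((g 1) ^ y - 1) / (g 1 - 1)) := by
  have key : ∀ y, y ≤ M → f y = ∑ i ∈ Finset.range y, (g 1) ^ i := by
    intro y
    induction y with
    | zero => simp [hf0]
    | succ n ih =>
      intro hy
      have h := heq 1 (n + 1) (by omega) hy
      have hfn := ih (by omega)
      rw [hf1, Nat.add_sub_cancel, hfn] at h
      have : f (n + 1) = 1 + g 1 * ∑ i ∈ Finset.range n, (g 1) ^ i := by linarith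
      rw [this, geom_sum_succ]; ring
  intro y hy1 hyM
  refine ⟨key y hyM, ?_, ?_⟩
  · intro hc
    rw [key y hyM, hc]
    simp
  · intro hc
    rw [key y hyM, geom_sum_eq hc]
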